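/- Let p be a prime, λ a partition with λ_{m+1} = 0, and define x_1,...,x_m as in the recursive description of J(λ) (x_i = 1 iff p ∤ (λ_i + x_{i+1} + ... + x_m)). Then a(λ) = λ₁ + x₂ + x₃ + ... + x_m, where a(λ) is the number of nodes in the p-rim of λ. -/

import Mathlib

namespace Mullineux

/-- The rim of a partition (given as its list of parts, top row first; nodes `(i,j)` with
row index `i` starting at `0` and column index `j` starting at `1`), listed in the order
obtained by reading along the rim from left to right (i.e. from the bottom-left node
to the top-right node). -/
def rimList (l : List ℕ) : List (ℕ × ℕ) :=
  ((List.range l.length).reverse).flatMap (fun i =>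
    (List.range' (max (l.getD (i+1) 0) 1) (l.getD i 0 + 1 - max (l.getD (i+1) 0) 1)).map
      (fun j => (i, j)))

/-- Auxiliary function computing the list of `p`-segments of a list of rim nodes
(read from left to right): take `p` nodes, then continue from the column strictly to
the right of the rightmost node taken so far. -/
def segsAux (p : ℕ) : ℕ → List (ℕ × ℕ) → List (List (ℕ × ℕ))
  | 0, _ => []
  | _ + 1, [] => []
  | fuel + 1, L =>
      let s := L.take p
      let c := ((s.getLast?).map Prod.snd).getD 0
      s :: segsAux p fuel ((L.drop p).filter (fun q => c < q.2))

/-- The `p`-segments of the rim of the partition `l`. -/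
def segs (p : ℕ) (l : List ℕ) : List (List (ℕ × ℕ)) :=
  segsAux p (rimList l).length (rimList l)

/-- The `p`-rim of the partition `l`: the union of the `p`-segments of its rim. -/
def pRim (p : ℕ) (l : List ℕ) : List (ℕ × ℕ) := (segs p l).flatten

/-- `a(λ)`: the number of nodes in the `p`-rim of `λ`. -/
def aNum (p : ℕ) (l : List ℕ) : ℕ := (pRim p l).length

/-- The final (i.e. `p`-th) nodes of the `p`-segments having exactly `p` nodes. -/
def segEnds (p : ℕ) (l : List ℕ) : List (ℕ × ℕ) :=
  (segs p l).filterMap (fun s => if s.length = p then s.getLast? else none)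

/-- `J(λ)`: delete from `λ` every node of the `p`-rim which is the rightmost node of its
row but is not the `p`-th node of a `p`-segment. -/
def Jmap (p : ℕ) (l : List ℕ) : List ℕ :=
  (List.range l.length).map (fun i =>
    let li := l.getD i 0
    if (i, li) ∈ pRim p l ∧ (i, li) ∉ segEnds p l then li - 1 else li)

/-- `j(λ) = |λ| - |J(λ)|`. -/
def jNum (p : ℕ) (l : List ℕ) : ℕ := l.sum - (Jmap p l).sum

/-- A partition, encoded as a weakly decreasing list of natural numbers
(trailing zeros allowed). -/
def IsPartition (l : List ℕ) : Prop := l.Pairwise (· ≥ ·)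

/-- A `p`-restricted partition: `λ_i - λ_{i+1} < p` for all `i`. -/
def IsRestricted (p : ℕ) (l : List ℕ) : Prop :=
  IsPartition l ∧ ∀ i, l.getD i 0 < l.getD (i+1) 0 + p

/-- Removing the whole `p`-rim of `λ` (used in forming the Mullineux symbol). -/
def rimRemove (p : ℕ) (l : List ℕ) : List ℕ :=
  (List.range l.length).map (fun i =>
    l.getD i 0 - ((pRim p l).filter (fun q => q.1 = i)).length)

/-- The `i`-th part (with `i` starting from `0`) of the Mullineux conjugate of `λ`,
as computed by Xu's algorithm: `j(J^i(λ))`. -/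
def xuPart (p : ℕ) (l : List ℕ) (i : ℕ) : ℕ := jNum p ((Jmap p)^[i] l)

/-- The Mullineux conjugate of `λ`, as computed by Xu's algorithm (padded with
trailing zeros to length `|λ|`). -/
def xuM (p : ℕ) (l : List ℕ) : List ℕ := (List.range l.sum).map (xuPart p l)

/-- `μ` has the Mullineux symbol prescribed by `λ`: for every `i ≥ 0`, writing
`λ⁽ⁱ⁾` (resp. `μ⁽ⁱ⁾`) for the result of removing the `p`-rim `i` times, the numbers of
`p`-rim nodes agree, `a_i := a(λ⁽ⁱ⁾) = a(μ⁽ⁱ⁾)`, and the first row of `μ⁽ⁱ⁾` is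
`s_i = a_i - r_i` if `p ∣ a_i` and `a_i + 1 - r_i` otherwise, where `r_i` is the first
row of `λ⁽ⁱ⁾`. -/
def IsMullineuxConjugate (p : ℕ) (l mu : List ℕ) : Prop :=
  ∀ i : ℕ,
    aNum p ((rimRemove p)^[i] l) = aNum p ((rimRemove p)^[i] mu) ∧
    (((rimRemove p)^[i] mu).getD 0 0 : ℤ) =
      (if (p : ℤ) ∣ (aNum p ((rimRemove p)^[i] l) : ℤ)
       then (aNum p ((rimRemove p)^[i] l) : ℤ) - (((rimRemove p)^[i] l).getD 0 0 : ℤ)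
       else (aNum p ((rimRemove p)^[i] l) : ℤ) + 1 - (((rimRemove p)^[i] l).getD 0 0 : ℤ))

/-- The sequence `x_m, x_{m-1}, …, x_1` (as a list `[x_1,…,x_m]`) defined recursively
downwards by `x_i = 0` if `p ∣ λ_i + x_{i+1} + ⋯ + x_m` and `x_i = 1` otherwise. -/
def xSeq (p : ℕ) : List ℕ → List ℕ
  | [] => []
  | a :: rest =>
      let xs := xSeq p rest
      (if p ∣ (a + xs.sum) then 0 else 1) :: xs

end Mullineux

/-!
Read from left to right, the columns of the rim form a weakly increasing sequence, and on such a
sequence the `p`-segment process is a left fold whose state is the number `n` of nodes taken so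
far and the last column reached: a node is skipped exactly when a segment has just been completed
(`p ∣ n`) and the node lies in that column. Putting a new first row `λ₁` on top of `λ₂ ≥ λ₃ ≥ ⋯`
appends the columns `λ₂, λ₂ + 1, …, λ₁` to the rim; all of them are taken except the first, which
is skipped iff `p ∣ a(λ₂, λ₃, …)`. So `a` grows by `λ₁ - λ₂ + x₂`, since
`a(λ₂, λ₃, …) = λ₂ + x₃ + ⋯ + x_m` by induction, and the formula follows.
-/

namespace Mullineux

def rimCols (l : List ℕ) : List ℕ := (rimList l).map Prod.snd

theorem rimCols_cons (a : ℕ) (rest : List ℕ) :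
    rimCols (a :: rest) = rimCols rest ++
      List.range' (max (rest.getD 0 0) 1) (a + 1 - max (rest.getD 0 0) 1) := by
  simp [rimCols, rimList, List.range_succ_eq_map, List.flatMap_append, List.map_flatMap,
    ← List.map_reverse, List.flatMap_map, Function.comp_def]

theorem IsPartition.getD_zero_le {a : ℕ} {rest : List ℕ} (h : IsPartition (a :: rest)) :
    rest.getD 0 0 ≤ a := by
  cases rest with
  | nil => simp
  | cons b rest => simpa [IsPartition] using (List.pairwise_cons.mp h).1 b (by simp)

theorem mem_rimCols {l : List ℕ} (hl : IsPartition l) {x : ℕ} (hx : x ∈ rimCols l) :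
    1 ≤ x ∧ x ≤ l.getD 0 0 := by
  induction l with
  | nil => simp [rimCols, rimList] at hx
  | cons a rest ih =>
    have hra := hl.getD_zero_le
    rw [rimCols_cons, List.mem_append, List.mem_range'_1] at hx
    rcases hx with hx | hx
    · have := ih hl.of_cons hx
      simp only [List.getD_cons_zero]; omega
    · simp only [List.getD_cons_zero]; omega

theorem rimCols_eq_nil {l : List ℕ} (hl : IsPartition l) (h0 : l.getD 0 0 = 0) :
    rimCols l = [] :=
  List.eq_nil_iff_forall_not_mem.mpr fun x hx => by have := mem_rimCols hl hx; omega

theorem rimCols_sorted {l : List ℕ} (hl : IsPartition l) : (rimCols l).Pairwise (· ≤ ·) := by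
  induction l with
  | nil => simp [rimCols, rimList]
  | cons a rest ih =>
    rw [rimCols_cons, List.pairwise_append]
    refine ⟨ih hl.of_cons, List.pairwise_le_range' 1, fun x hx y hy => ?_⟩
    have := (mem_rimCols hl.of_cons hx).2
    rw [List.mem_range'_1] at hy
    omega

def segStep (p : ℕ) (s : ℕ × ℕ) (x : ℕ) : ℕ × ℕ :=
  if p ∣ s.1 ∧ x ≤ s.2 then s else (s.1 + 1, x)

theorem foldl_segStep_of_forall_not_dvd (p : ℕ) {M : List ℕ} {n c : ℕ}
    (hM : ∀ k, 0 < k → k < M.length → ¬ p ∣ n + k) (hc : p ∣ n → ∀ x ∈ M.head?, c < x) :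
    M.foldl (segStep p) (n, c) = (n + M.length, M.getLastD c) := by
  induction M generalizing n c with
  | nil => rfl
  | cons x M ih =>
    have hx : segStep p (n, c) x = (n + 1, x) :=
      if_neg fun ⟨hdvd, hle⟩ => (hc hdvd x rfl).not_ge hle
    rw [List.foldl_cons, hx, ih, List.getLastD_cons, List.length_cons, Nat.add_assoc,
      Nat.add_comm 1]
    · intro k hk0 hk
      rw [Nat.add_assoc]
      exact hM (1 + k) (by omega) (by simp; omega)
    · intro hdvd y hy
      cases M with
      | nil => simp at hy
      | cons => exact absurd hdvd (hM 1 one_pos (by simp))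

theorem foldl_segStep_filter (p : ℕ) {L : List ℕ} {n c : ℕ} (hn : p ∣ n)
    (hL : L.Pairwise (· ≤ ·)) :
    (L.filter (c < ·)).foldl (segStep p) (n, c) = L.foldl (segStep p) (n, c) := by
  induction L with
  | nil => rfl
  | cons x L ih =>
    by_cases hx : c < x
    · rw [List.filter_eq_self.mpr]
      intro y hy
      rcases List.mem_cons.mp hy with rfl | hy
      · simpa using hx
      · simpa using hx.trans_le (List.rel_of_pairwise_cons hL hy)
    · rw [List.filter_cons_of_neg (by simpa using hx), ih hL.of_cons, List.foldl_cons]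
      simp [segStep, hn, not_lt.mp hx]

theorem foldl_segStep_range' (p : ℕ) (n c t : ℕ) :
    (List.range' (c + 1) t).foldl (segStep p) (n, c) = (n + t, c + t) := by
  induction t generalizing n c with
  | zero => rfl
  | succ t ih =>
    rw [List.range'_succ, List.foldl_cons, segStep, if_neg (by simp), ih]
    simp only [Prod.mk.injEq]
    omega

theorem segsAux_nil (p fuel : ℕ) : segsAux p fuel [] = [] := by
  cases fuel <;> rfl

theorem foldl_segStep_take {p : ℕ} {L : List ℕ} {n c : ℕ} (hn : p ∣ n) (hc : ∀ x ∈ L, c < x) :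
    (L.take p).foldl (segStep p) (n, c) = (n + (L.take p).length, (L.take p).getLastD c) := by
  refine foldl_segStep_of_forall_not_dvd p (fun k hk0 hk hdvd => ?_) fun _ x hx => ?_
  · have : k < p := hk.trans_le (List.length_take_le p L)
    exact Nat.not_dvd_of_pos_of_lt hk0 this ((Nat.dvd_add_right hn).mp hdvd)
  · exact hc x (List.mem_of_mem_take (List.mem_of_mem_head? hx))

theorem foldl_segStep_eq_add_length_flatten_segsAux {p : ℕ} (hp : 0 < p) {fuel : ℕ}
    {L : List (ℕ × ℕ)} (hfuel : L.length ≤ fuel) (hL : (L.map Prod.snd).Pairwise (· ≤ ·))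
    {n c : ℕ} (hn : p ∣ n) (hc : ∀ q ∈ L, c < q.2) :
    ((L.map Prod.snd).foldl (segStep p) (n, c)).1 = n + (segsAux p fuel L).flatten.length := by
  induction fuel generalizing L n c with
  | zero => simp_all [segsAux]
  | succ fuel ih =>
    rcases L with _ | ⟨q, L⟩
    · simp [segsAux_nil]
    set c' := ((((q :: L).take p).getLast?).map Prod.snd).getD 0
    have hsegs : segsAux p (fuel + 1) (q :: L) = (q :: L).take p ::
        segsAux p fuel (((q :: L).drop p).filter (fun r => c' < r.2)) := rfl
    have hcol : ∀ x ∈ (q :: L).map Prod.snd, c < x := by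
      simpa only [List.forall_mem_map] using hc
    have htake : (((q :: L).map Prod.snd).take p).foldl (segStep p) (n, c) =
        (n + ((q :: L).take p).length, c') := by
      rw [foldl_segStep_take hn hcol, List.length_take, List.length_take, List.length_map,
        List.getLastD_eq_getLast?, ← List.map_take, List.getLast?_map]
      obtain ⟨z, hz⟩ : ∃ z, ((q :: L).take p).getLast? = some z :=
        Option.ne_none_iff_exists'.mp (by simp [hp.ne'])
      simp [c', hz]
    rw [← List.take_append_drop p ((q :: L).map Prod.snd), List.foldl_append, htake, hsegs,
      List.flatten_cons, List.length_append, ← Nat.add_assoc]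
    rcases le_or_gt (q :: L).length p with hshort | hlong
    · rw [List.drop_eq_nil_of_le (by simpa using hshort)]
      simp [List.drop_eq_nil_of_le hshort, segsAux_nil]
    · have hn' : p ∣ n + ((q :: L).take p).length := by
        rw [List.length_take_of_le hlong.le]
        exact Nat.dvd_add hn dvd_rfl
      rw [← foldl_segStep_filter p hn' (hL.sublist (List.drop_sublist _ _)), ← List.map_drop,
        List.filter_map]
      refine ih ?_ ?_ hn' ?_
      · have := List.length_filter_le (fun r => decide (c' < r.2)) ((q :: L).drop p)
        simp only [List.length_drop, List.length_cons] at this hfuel hlong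
        simp only [Function.comp_def]
        omega
      · exact hL.sublist ((List.filter_sublist.trans (List.drop_sublist _ _)).map _)
      · intro r hr
        simpa using (List.mem_filter.mp hr).2

theorem aNum_eq_foldl_segStep {p : ℕ} (hp : 0 < p) {l : List ℕ} (hl : IsPartition l) :
    aNum p l = ((rimCols l).foldl (segStep p) (0, 0)).1 := by
  rw [rimCols, foldl_segStep_eq_add_length_flatten_segsAux hp le_rfl (rimCols_sorted hl)
    (dvd_zero p) fun q hq => (mem_rimCols hl (List.mem_map_of_mem hq)).1, zero_add]
  rfl

theorem sum_xSeq (p : ℕ) (l : List ℕ) :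
    (xSeq p l).sum =
      (if p ∣ l.getD 0 0 + ((xSeq p l).drop 1).sum then 0 else 1) + ((xSeq p l).drop 1).sum := by
  cases l <;> simp [xSeq]

theorem foldl_segStep_rimCols (p : ℕ) {l : List ℕ} (hl : IsPartition l) :
    (rimCols l).foldl (segStep p) (0, 0) =
      (l.getD 0 0 + ((xSeq p l).drop 1).sum, l.getD 0 0) := by
  induction l with
  | nil => rfl
  | cons a rest ih =>
    have hra := hl.getD_zero_le
    have hxSeq : (xSeq p (a :: rest)).drop 1 = xSeq p rest := rfl
    rw [rimCols_cons, List.foldl_append, ih hl.of_cons, hxSeq, sum_xSeq, List.getD_cons_zero]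
    set r := rest.getD 0 0
    set T := ((xSeq p rest).drop 1).sum
    rcases Nat.eq_zero_or_pos r with hr | hr
    · have hT : T = 0 := by
        simpa [rimCols_eq_nil hl.of_cons hr, hr] using (ih hl.of_cons).symm
      simpa [hr, hT] using foldl_segStep_range' p 0 0 a
    · rw [max_eq_left hr, show a + 1 - r = (a - r) + 1 by omega, List.range'_succ,
        List.foldl_cons]
      have hstep : segStep p (r + T, r) r = (r + T + if p ∣ r + T then 0 else 1, r) := by
        by_cases hd : p ∣ r + T <;> simp [segStep, hd]
      rw [hstep, foldl_segStep_range', Prod.mk.injEq]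
      split_ifs <;> omega

end Mullineux

open Mullineux in
/-- `a(λ) = λ₁ + x₂ + x₃ + ⋯ + x_m`, where the `x_i` are defined recursively by
`x_i = 1` iff `p ∤ λ_i + x_{i+1} + ⋯ + x_m`. -/
theorem aNum_eq_head_add_tail_xSeq (p : ℕ) (hp : p.Prime) (l : List ℕ)
    (hl : IsPartition l) :
    aNum p l = l.getD 0 0 + ((xSeq p l).drop 1).sum := by
  rw [aNum_eq_foldl_segStep hp.pos hl, foldl_segStep_rimCols p hl]
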